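/- Let A be a real n×n positive definite matrix, let B be a real n×k matrix of rank k, let C be a real n×m matrix of rank m (with k ≤ m ≤ n), and suppose there exists a real m×k matrix M such that B = C·M. Then Tr(B (BᵀAB)⁻¹ Bᵀ) ≤ Tr(C (CᵀAC)⁻¹ Cᵀ). -/

import Mathlib

/-!
Write `P_B = asymptoticCov A B = B (BᵀAB)⁻¹ Bᵀ`, so that `P_B A` is the `A`-orthogonal projection
onto the column space of `B`. When that space lies in the column space of `C`, the two projections
absorb each other, and `X = P_C - P_B` satisfies `X A X = X`. As `X` is symmetric, `X = Xᵀ A X`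
is positive semidefinite, so its trace is nonnegative.
-/

open Matrix

namespace Matrix

theorem mulVec_injective_of_rank_eq_card {K m n : Type*} [Field K] [Fintype n]
    {B : Matrix m n K} (hB : B.rank = Fintype.card n) : Function.Injective B.mulVec := by
  have hker : Module.finrank K (LinearMap.ker B.mulVecLin) = 0 := by
    have := LinearMap.finrank_range_add_finrank_ker B.mulVecLin
    rw [Module.finrank_fintype_fun_eq_card] at this
    unfold Matrix.rank at hB
    omega
  rw [← coe_mulVecLin, ← LinearMap.ker_eq_bot, ← Submodule.finrank_eq_zero, hker]

variable {n k m : Type*} [Fintype n] [Fintype k] [Fintype m] [DecidableEq k] [DecidableEq m]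

section CommRing

variable {R : Type*} [CommRing R]

noncomputable def asymptoticCov (A : Matrix n n R) (B : Matrix n k R) : Matrix n n R :=
  B * (Bᵀ * A * B)⁻¹ * Bᵀ

theorem transpose_asymptoticCov {A : Matrix n n R} (hA : Aᵀ = A) (B : Matrix n k R) :
    (asymptoticCov A B)ᵀ = asymptoticCov A B := by
  simp only [asymptoticCov, transpose_mul, transpose_transpose, transpose_nonsing_inv, hA,
    Matrix.mul_assoc]

omit [Fintype k] [DecidableEq k] in
theorem asymptoticCov_mul_mul_of_eq_mul {A : Matrix n n R} {B : Matrix n k R}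
    {C : Matrix n m R} {M : Matrix m k R} (hC : IsUnit (Cᵀ * A * C).det) (hBCM : B = C * M) :
    asymptoticCov A C * A * B = B := by
  have hCinv : (Cᵀ * A * C)⁻¹ * (Cᵀ * A * C) = 1 := nonsing_inv_mul _ hC
  calc asymptoticCov A C * A * B = C * ((Cᵀ * A * C)⁻¹ * (Cᵀ * A * C)) * M := by
        simp only [asymptoticCov, hBCM, Matrix.mul_assoc]
    _ = B := by rw [hCinv, Matrix.mul_one, hBCM]

omit [Fintype k] [DecidableEq k] in
theorem transpose_mul_mul_asymptoticCov_of_eq_mul {A : Matrix n n R} (hA : Aᵀ = A)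
    {B : Matrix n k R} {C : Matrix n m R} {M : Matrix m k R} (hC : IsUnit (Cᵀ * A * C).det)
    (hBCM : B = C * M) : Bᵀ * A * asymptoticCov A C = Bᵀ := by
  simpa only [transpose_mul, transpose_asymptoticCov hA, hA, Matrix.mul_assoc] using
    congrArg transpose (asymptoticCov_mul_mul_of_eq_mul hC hBCM)

theorem mul_mul_asymptoticCov_of_mul_mul_eq {A P : Matrix n n R} {B : Matrix n k R}
    (hP : P * A * B = B) : P * A * asymptoticCov A B = asymptoticCov A B := by
  simp only [asymptoticCov, ← Matrix.mul_assoc, hP]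

theorem asymptoticCov_mul_mul_of_mul_mul_eq {A P : Matrix n n R} {B : Matrix n k R}
    (hP : Bᵀ * A * P = Bᵀ) : asymptoticCov A B * A * P = asymptoticCov A B := by
  simp only [asymptoticCov, Matrix.mul_assoc] at hP ⊢
  rw [hP]

theorem asymptoticCov_sub_mul_mul_self_of_eq_mul {A : Matrix n n R} (hA : Aᵀ = A)
    {B : Matrix n k R} {C : Matrix n m R} {M : Matrix m k R} (hB : IsUnit (Bᵀ * A * B).det)
    (hC : IsUnit (Cᵀ * A * C).det) (hBCM : B = C * M) :
    (asymptoticCov A C - asymptoticCov A B) * A * (asymptoticCov A C - asymptoticCov A B) =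
      asymptoticCov A C - asymptoticCov A B := by
  have hCC : asymptoticCov A C * A * asymptoticCov A C = asymptoticCov A C :=
    mul_mul_asymptoticCov_of_mul_mul_eq <|
      asymptoticCov_mul_mul_of_eq_mul hC (Matrix.mul_one C).symm
  have hBB : asymptoticCov A B * A * asymptoticCov A B = asymptoticCov A B :=
    mul_mul_asymptoticCov_of_mul_mul_eq <|
      asymptoticCov_mul_mul_of_eq_mul hB (Matrix.mul_one B).symm
  have hCB : asymptoticCov A C * A * asymptoticCov A B = asymptoticCov A B :=
    mul_mul_asymptoticCov_of_mul_mul_eq (asymptoticCov_mul_mul_of_eq_mul hC hBCM)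
  have hBC : asymptoticCov A B * A * asymptoticCov A C = asymptoticCov A B :=
    asymptoticCov_mul_mul_of_mul_mul_eq (transpose_mul_mul_asymptoticCov_of_eq_mul hA hC hBCM)
  simp only [Matrix.sub_mul, Matrix.mul_sub, hCC, hBB, hCB, hBC]
  abel

end CommRing

theorem PosDef.isUnit_det_transpose_mul_mul {A : Matrix n n ℝ} (hA : A.PosDef)
    {B : Matrix n k ℝ} (hB : B.rank = Fintype.card k) : IsUnit (Bᵀ * A * B).det :=
  (isUnit_iff_isUnit_det _).mp
    (hA.conjTranspose_mul_mul_same (mulVec_injective_of_rank_eq_card hB)).isUnit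

theorem posSemidef_asymptoticCov_sub_of_eq_mul {A : Matrix n n ℝ} (hA : A.PosSemidef)
    {B : Matrix n k ℝ} {C : Matrix n m ℝ} {M : Matrix m k ℝ} (hB : IsUnit (Bᵀ * A * B).det)
    (hC : IsUnit (Cᵀ * A * C).det) (hBCM : B = C * M) :
    (asymptoticCov A C - asymptoticCov A B).PosSemidef := by
  have hAT : Aᵀ = A := hA.isHermitian.eq
  have hXT :
      (asymptoticCov A C - asymptoticCov A B)ᵀ = asymptoticCov A C - asymptoticCov A B := by
    rw [transpose_sub, transpose_asymptoticCov hAT, transpose_asymptoticCov hAT]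
  rw [← asymptoticCov_sub_mul_mul_self_of_eq_mul hAT hB hC hBCM]
  nth_rw 1 [← hXT]
  exact hA.conjTranspose_mul_mul_same _

end Matrix

theorem nested_asymptotic_covariance_trace_le_general
    (n k m : ℕ)
    (A : Matrix (Fin n) (Fin n) ℝ) (hA : A.PosDef)
    (B : Matrix (Fin n) (Fin k) ℝ) (hB : B.rank = k)
    (C : Matrix (Fin n) (Fin m) ℝ) (hC : C.rank = m)
    (M : Matrix (Fin m) (Fin k) ℝ) (hBCM : B = C * M) :
    (B * (Bᵀ * A * B)⁻¹ * Bᵀ).trace ≤ (C * (Cᵀ * A * C)⁻¹ * Cᵀ).trace := by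
  have hB' := hA.isUnit_det_transpose_mul_mul (hB.trans (Fintype.card_fin k).symm)
  have hC' := hA.isUnit_det_transpose_mul_mul (hC.trans (Fintype.card_fin m).symm)
  rw [← sub_nonneg, ← trace_sub]
  exact (posSemidef_asymptoticCov_sub_of_eq_mul hA.posSemidef hB' hC' hBCM).trace_nonneg

/-- for positive definite `A` and nested full-rank Jacobians
`B = C * M`, the traces of the asymptotic covariances satisfy
`Tr(B (BᵀAB)⁻¹ Bᵀ) ≤ Tr(C (CᵀAC)⁻¹ Cᵀ)`. -/
theorem nested_asymptotic_covariance_trace_le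
    (n k m : ℕ) (hkm : k ≤ m) (hmn : m ≤ n)
    (A : Matrix (Fin n) (Fin n) ℝ) (hA : A.PosDef)
    (B : Matrix (Fin n) (Fin k) ℝ) (hB : B.rank = k)
    (C : Matrix (Fin n) (Fin m) ℝ) (hC : C.rank = m)
    (M : Matrix (Fin m) (Fin k) ℝ) (hBCM : B = C * M) :
    (B * (Bᵀ * A * B)⁻¹ * Bᵀ).trace ≤ (C * (Cᵀ * A * C)⁻¹ * Cᵀ).trace :=
  nested_asymptotic_covariance_trace_le_general n k m A hA B hB C hC M hBCM
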